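/- Let A and M be symmetric positive definite n×n real matrices, let ω > 0, and suppose that every real λ for which there exists a nonzero vector v with A v = λ M v satisfies ω λ < 2. Then the smoothing iteration matrix S = I − ω M⁻¹ A is a strict contraction in the A-norm: for every nonzero vector x, (S x)ᵀ A (S x) < xᵀ A x. -/

import Mathlib

open Matrix

section Aux

variable {n : ℕ}

private lemma transpose_of_herm {N : Matrix (Fin n) (Fin n) ℝ} (h : N.IsHermitian) :
    Nᵀ = N := by
  rw [← conjTranspose_eq_transpose_of_trivial]; exact h.eq

/-- Rayleigh-type bound from eigenvalue bounds, for a real symmetric matrix. -/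
private lemma rayleigh_bound {B : Matrix (Fin n) (Fin n) ℝ} (hB : B.IsHermitian)
    (ω : ℝ) (heig : ∀ i, ω * hB.eigenvalues i < 2) :
    ∀ w : Fin n → ℝ, w ≠ 0 → ω * (w ⬝ᵥ B *ᵥ w) < 2 * (w ⬝ᵥ w) := by
  intro w hw
  set V : Matrix (Fin n) (Fin n) ℝ := (hB.eigenvectorUnitary : Matrix (Fin n) (Fin n) ℝ) with hVdef
  have hV1 : V * Vᵀ = 1 := by
    have := (mem_unitaryGroup_iff).mp hB.eigenvectorUnitary.2
    rwa [star_eq_conjTranspose, conjTranspose_eq_transpose_of_trivial] at this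
  have hV2 : Vᵀ * V = 1 := by
    have := (mem_unitaryGroup_iff').mp hB.eigenvectorUnitary.2
    rwa [star_eq_conjTranspose, conjTranspose_eq_transpose_of_trivial] at this
  set u := Vᵀ *ᵥ w with hu
  clear_value V u
  have huw : V *ᵥ u = w := by rw [hu, mulVec_mulVec, hV1, one_mulVec]
  have hu0 : u ≠ 0 := fun h => hw (by rw [← huw, h, mulVec_zero])
  obtain ⟨j, hj⟩ := Function.ne_iff.mp hu0
  have hsp : B = V * diagonal hB.eigenvalues * Vᵀ := by
    conv_lhs => rw [hB.spectral_theorem]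
    rw [Unitary.conjStarAlgAut_apply, star_eq_conjTranspose, conjTranspose_eq_transpose_of_trivial,
      RCLike.ofReal_real_eq_id, Function.id_comp, ← hVdef]
  have hww : w ⬝ᵥ w = u ⬝ᵥ u := by
    conv_lhs => rw [← huw]
    rw [dotProduct_mulVec, ← mulVec_transpose, mulVec_mulVec, hV2, one_mulVec]
  have hBw : w ⬝ᵥ B *ᵥ w = ∑ i, hB.eigenvalues i * (u i) ^ 2 := by
    conv_lhs => rw [hsp, ← huw]
    rw [mulVec_mulVec, mul_assoc (V * diagonal hB.eigenvalues) Vᵀ V, hV2, mul_one,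
      ← mulVec_mulVec, dotProduct_mulVec, ← mulVec_transpose, mulVec_mulVec, hV2, one_mulVec]
    simp only [dotProduct, mulVec_diagonal]
    exact Finset.sum_congr rfl fun i _ => by ring
  rw [hBw, hww]
  simp only [dotProduct]
  rw [Finset.mul_sum, Finset.mul_sum]
  apply Finset.sum_lt_sum
  · intro i _
    nlinarith [heig i, sq_nonneg (u i)]
  · refine ⟨j, Finset.mem_univ j, ?_⟩
    have h1 : 0 < |u j| := abs_pos.mpr hj
    have h2 : 0 < u j ^ 2 := by rw [← sq_abs]; positivity
    nlinarith [heig j, h2]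

end Aux

/-- If `A` and `M` are SPD and `ω > 0` is such that `ω λ < 2` for every generalized
eigenvalue `λ` of the pencil `A v = λ M v`, then the smoother `S = I − ω M⁻¹ A` is a
strict contraction in the `A`-norm. -/
theorem smoother_contraction_A_norm (n : ℕ)
    (A M : Matrix (Fin n) (Fin n) ℝ) (hA : A.PosDef) (hM : M.PosDef)
    (ω : ℝ) (hω : 0 < ω)
    (hspec : ∀ lam : ℝ, (∃ v : Fin n → ℝ, v ≠ 0 ∧ A.mulVec v = lam • M.mulVec v) →
      ω * lam < 2)
    (S : Matrix (Fin n) (Fin n) ℝ)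
    (hS : S = 1 - ω • (M⁻¹ * A)) :
    ∀ x : Fin n → ℝ, x ≠ 0 →
      (S.mulVec x) ⬝ᵥ A.mulVec (S.mulVec x) < x ⬝ᵥ A.mulVec x := by
  intro x hx
  -- square root of M
  open scoped MatrixOrder in
  set N := CFC.sqrt M with hNdef
  open scoped MatrixOrder in
  have hNherm : N.IsHermitian := (nonneg_iff_posSemidef.mp (CFC.sqrt_nonneg M)).1
  open scoped MatrixOrder in
  have hNN : N * N = M := CFC.sqrt_mul_sqrt_self M hM.posSemidef.nonneg
  clear_value N
  have hMdet : IsUnit M.det := hM.det_pos.ne'.isUnit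
  have hNdet : IsUnit N.det := by
    refine isUnit_iff_ne_zero.mpr fun h => ?_
    have := hM.det_pos
    rw [← hNN, det_mul, h, zero_mul] at this
    exact lt_irrefl 0 this
  have hNinv : N * N⁻¹ = 1 := mul_nonsing_inv N hNdet
  have hNinv' : N⁻¹ * N = 1 := nonsing_inv_mul N hNdet
  have hNiherm : (N⁻¹).IsHermitian := hNherm.inv
  set B := N⁻¹ * A * N⁻¹ with hBdef
  clear_value B
  have hB : B.IsHermitian := by
    show Bᴴ = B
    rw [hBdef, conjTranspose_mul, conjTranspose_mul, hA.1.eq, hNiherm.eq, mul_assoc]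
  -- eigenvalues of B are generalized eigenvalues of the pencil
  have heig : ∀ i, ω * hB.eigenvalues i < 2 := by
    intro i
    set u : Fin n → ℝ := ⇑(hB.eigenvectorBasis i) with hudef
    have hu : B *ᵥ u = hB.eigenvalues i • u := hB.mulVec_eigenvectorBasis i
    have hune : u ≠ 0 := by
      intro h
      apply hB.eigenvectorBasis.toBasis.ne_zero i
      rw [OrthonormalBasis.coe_toBasis]
      ext j
      exact congrFun h j
    apply hspec
    refine ⟨N⁻¹ *ᵥ u, fun h => ?_, ?_⟩
    · apply hune
      have h2 : N *ᵥ (N⁻¹ *ᵥ u) = u := by rw [mulVec_mulVec, hNinv, one_mulVec]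
      rw [h, mulVec_zero] at h2
      exact h2.symm
    · have h1 : A *ᵥ (N⁻¹ *ᵥ u) = N *ᵥ (B *ᵥ u) := by
        rw [mulVec_mulVec, mulVec_mulVec]
        rw [hBdef, ← mul_assoc, ← mul_assoc, hNinv, one_mul]
      have h2 : M *ᵥ (N⁻¹ *ᵥ u) = N *ᵥ u := by
        rw [mulVec_mulVec, ← hNN, mul_assoc, hNinv, mul_one]
      rw [h1, hu, mulVec_smul, h2]
  have hkey := rayleigh_bound hB ω heig
  -- the vector y = M⁻¹ A x
  set y := M⁻¹ *ᵥ (A *ᵥ x) with hy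
  clear_value y
  have hMy : M *ᵥ y = A *ᵥ x := by
    rw [hy, mulVec_mulVec, mul_nonsing_inv M hMdet, one_mulVec]
  have hy0 : y ≠ 0 := by
    intro h
    have hAx : A *ᵥ x = 0 := by rw [← hMy, h, mulVec_zero]
    have hpos := hA.dotProduct_mulVec_pos hx
    rw [hAx, dotProduct_zero] at hpos
    exact lt_irrefl 0 hpos
  have hSx : S *ᵥ x = x - ω • y := by
    rw [hS, sub_mulVec, one_mulVec, smul_mulVec, ← mulVec_mulVec, ← hy]
  -- transfer the Rayleigh bound to y through w = N y
  have hNy : N *ᵥ y ≠ 0 := by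
    intro h
    apply hy0
    have h2 : N⁻¹ *ᵥ (N *ᵥ y) = y := by rw [mulVec_mulVec, hNinv', one_mulVec]
    rw [h, mulVec_zero] at h2
    exact h2.symm
  have hBN : B * N = N⁻¹ * A := by rw [hBdef, mul_assoc, hNinv', mul_one]
  have h3 : B *ᵥ (N *ᵥ y) = N⁻¹ *ᵥ (A *ᵥ y) := by
    rw [mulVec_mulVec, hBN, ← mulVec_mulVec]
  have hyA : (N *ᵥ y) ⬝ᵥ B *ᵥ (N *ᵥ y) = y ⬝ᵥ A *ᵥ y := by
    rw [h3, dotProduct_mulVec _ N⁻¹ _, ← mulVec_transpose, transpose_of_herm hNiherm,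
      mulVec_mulVec, hNinv', one_mulVec]
  have hyM : (N *ᵥ y) ⬝ᵥ (N *ᵥ y) = y ⬝ᵥ M *ᵥ y := by
    conv_lhs => rw [dotProduct_mulVec, ← mulVec_transpose, transpose_of_herm hNherm,
      mulVec_mulVec, hNN]
    exact dotProduct_comm _ _
  have hkey' : ω * (y ⬝ᵥ A *ᵥ y) < 2 * (y ⬝ᵥ M *ᵥ y) := by
    rw [← hyA, ← hyM]
    exact hkey _ hNy
  have hsymm : x ⬝ᵥ A *ᵥ y = y ⬝ᵥ A *ᵥ x := by
    rw [dotProduct_mulVec x A y, ← mulVec_transpose, transpose_of_herm hA.1,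
      dotProduct_comm]
  have hyAx : y ⬝ᵥ A *ᵥ x = y ⬝ᵥ M *ᵥ y := by rw [hMy]
  have expand : (x - ω • y) ⬝ᵥ A *ᵥ (x - ω • y)
      = x ⬝ᵥ A *ᵥ x - ω * (2 * (y ⬝ᵥ M *ᵥ y) - ω * (y ⬝ᵥ A *ᵥ y)) := by
    rw [mulVec_sub, mulVec_smul, sub_dotProduct, dotProduct_sub, dotProduct_sub,
      smul_dotProduct, dotProduct_smul, dotProduct_smul, smul_dotProduct]
    simp only [smul_eq_mul]
    rw [hsymm, hyAx]
    ring
  rw [hSx, expand]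
  have hpos : 0 < 2 * (y ⬝ᵥ M *ᵥ y) - ω * (y ⬝ᵥ A *ᵥ y) := by linarith
  nlinarith [mul_pos hω hpos]
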